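/- Let (W, S) be a Coxeter system and let x', w, w' ∈ W with w ≤ w' in the Bruhat order. Then: (i) there exists x ≤ x' such that x·w ≤ x'·w'; and (ii) there exists x ≤ x' such that x'·w ≤ x·w'. -/

import Mathlib

open CoxeterSystem

variable {B W : Type*} [Group W] {M : CoxeterMatrix B}

/-- The strong Bruhat order on a Coxeter group: the reflexive-transitive closure of the
relation relating `a` to `a * t` where `t` is a reflection and the length increases. -/
def bruhatLE (cs : CoxeterSystem M W) (u v : W) : Prop :=
  Relation.ReflTransGen
    (fun a b => ∃ t : W, cs.IsReflection t ∧ b = a * t ∧ cs.length a < cs.length b) u v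

/-- `ᴶW`: the set of `w` with `ℓ(s w) > ℓ(w)` for all `s ∈ J`, i.e. the minimal length
representatives of the cosets `W_J \ W`. Here `J` is a set of simple reflections of `W`. -/
def minLeft (cs : CoxeterSystem M W) (J : Set W) : Set W :=
  {w | ∀ s ∈ J, cs.length w < cs.length (s * w)}

/-- `Wᴶ`: the set of `w` with `ℓ(w s) > ℓ(w)` for all `s ∈ J`, i.e. the minimal length
representatives of the cosets `W / W_J`. -/
def minRight (cs : CoxeterSystem M W) (J : Set W) : Set W :=
  {w | ∀ s ∈ J, cs.length w < cs.length (w * s)}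

/-!
Both parts follow by induction along a chain of Bruhat covers from `w` to `w'`, from one lifting
fact: if `ℓ(w) < ℓ(wt)` but `ℓ(uwt) < ℓ(uw)` for a reflection `t`, then `r = wtw⁻¹` satisfies
`ℓ(ur) < ℓ(u)`, so `ur ≤ u` while `(ur)w = uwt`. This fact is read off the reflection cocycle
`n(w, t) ∈ ZMod 2` of Björner–Brenti (proof of Theorem 1.4.3): the parity of the number of
occurrences of `t` in the right inversion sequence of any word for `w`. It is well defined
because `sᵢ ↦ ((t, ε) ↦ (sᵢ t sᵢ, ε + [t = sᵢ]))` respects the braid relations; it satisfies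
`n(uv, t) = n(v, t) + n(u, vtv⁻¹)`, and for a reflection `t`, `n(w, t) = 1` iff `ℓ(wt) < ℓ(w)`.
-/

open List

theorem ZMod.eq_one_iff_ne_zero_mod_two (a : ZMod 2) : a = 1 ↔ a ≠ 0 := by
  revert a
  decide

namespace CoxeterSystem

variable (cs : CoxeterSystem M W)

open Classical in
noncomputable def simpleReflAction (i : B) : Function.End (W × ZMod 2) :=
  fun p => (cs.simple i * p.1 * cs.simple i, p.2 + if p.1 = cs.simple i then 1 else 0)

open Classical in
theorem prod_map_simpleReflAction_apply (ω : List B) (t : W) (ε : ZMod 2) :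
    (ω.map cs.simpleReflAction).prod (t, ε) =
      (cs.wordProd ω * t * (cs.wordProd ω)⁻¹, ε + (count t (cs.rightInvSeq ω) : ZMod 2)) := by
  induction ω with
  | nil => simp [Function.End.one_def]
  | cons i ω ih =>
    change cs.simpleReflAction i ((ω.map cs.simpleReflAction).prod (t, ε)) = _
    rw [ih]
    have hconj : cs.wordProd ω * (t * (cs.wordProd ω)⁻¹) = cs.simple i ↔
        (cs.wordProd ω)⁻¹ * (cs.simple i * cs.wordProd ω) = t := by
      constructor
      · rintro h; rw [← h]; group
      · rintro rfl; group
    simp only [simpleReflAction, rightInvSeq, wordProd_cons, count_cons, beq_iff_eq, hconj,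
      mul_inv_rev, inv_simple, mul_assoc, Nat.cast_add, Nat.cast_ite, Nat.cast_one, Nat.cast_zero,
      add_assoc]

theorem alternatingWord_two_mul_add_two (i j : B) (p : ℕ) :
    alternatingWord i j (2 * p + 2) = i :: j :: alternatingWord i j (2 * p) := by
  simp [alternatingWord_succ', parity_simps]

theorem reverse_alternatingWord_two_mul (i j : B) (p : ℕ) :
    (alternatingWord i j (2 * p)).reverse = alternatingWord j i (2 * p) := by
  induction p with
  | zero => rfl
  | succ p ih =>
    rw [mul_add, mul_one, alternatingWord_two_mul_add_two, alternatingWord_succ,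
      alternatingWord_succ]
    simp [ih]

theorem wordProd_alternatingWord_add_two_mul {i j : B} {m : ℕ}
    (hm : (cs.simple i * cs.simple j) ^ m = 1) (n : ℕ) :
    cs.wordProd (alternatingWord i j (n + 2 * m)) = cs.wordProd (alternatingWord i j n) := by
  rw [prod_alternatingWord_eq_mul_pow, prod_alternatingWord_eq_mul_pow,
    Nat.add_mul_div_left _ _ two_pos, pow_add, hm, mul_one]
  simp [parity_simps]

theorem _root_.List.even_count_of_take_eq_drop {α : Type*} [BEq α] {L : List α} {m : ℕ}
    (h : L.take m = L.drop m) (a : α) : Even (L.count a) := by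
  rw [← take_append_drop m L, count_append, ← h]
  exact ⟨_, rfl⟩

open Classical in
theorem even_count_rightInvSeq_braid (i j : B) (t : W) :
    Even ((cs.rightInvSeq (alternatingWord i j (2 * M i j))).count t) := by
  -- the left inversion sequence of this word is periodic with period `M i j`
  rw [← reverse_alternatingWord_two_mul j i, rightInvSeq_reverse, count_reverse]
  apply even_count_of_take_eq_drop (m := M i j)
  apply ext_getElem (by simp; omega)
  intro k hk _
  simp only [length_take, length_leftInvSeq, length_alternatingWord] at hk
  rw [getElem_take, getElem_drop, getElem_leftInvSeq_alternatingWord _ _ _ _ _ (by omega),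
    getElem_leftInvSeq_alternatingWord _ _ _ _ _ (by omega),
    show 2 * (M i j + k) + 1 = 2 * k + 1 + 2 * M i j by ring,
    wordProd_alternatingWord_add_two_mul _ (cs.simple_mul_simple_pow i j)]

theorem simpleReflAction_isLiftable : M.IsLiftable cs.simpleReflAction := by
  intro i j
  have hpow : ∀ m, (cs.simpleReflAction i * cs.simpleReflAction j) ^ m =
      ((alternatingWord i j (2 * m)).map cs.simpleReflAction).prod := by
    intro m
    induction m with
    | zero => rfl
    | succ m ih =>
      rw [pow_succ', ih, mul_add, mul_one, alternatingWord_two_mul_add_two]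
      simp [mul_assoc]
  have hπ : cs.wordProd (alternatingWord i j (2 * M i j)) = 1 := by
    simpa [alternatingWord] using
      cs.wordProd_alternatingWord_add_two_mul (cs.simple_mul_simple_pow i j) 0
  rw [hpow]
  funext ⟨t, ε⟩
  rw [prod_map_simpleReflAction_apply, hπ,
    (ZMod.natCast_eq_zero_iff_even).2 (cs.even_count_rightInvSeq_braid i j t)]
  simp [Function.End.one_def]

noncomputable def reflAction : W →* Function.End (W × ZMod 2) :=
  cs.lift ⟨cs.simpleReflAction, cs.simpleReflAction_isLiftable⟩

noncomputable def inversionParity (w t : W) : ZMod 2 := (cs.reflAction w (t, 0)).2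

theorem reflAction_wordProd (ω : List B) :
    cs.reflAction (cs.wordProd ω) = (ω.map cs.simpleReflAction).prod := by
  rw [wordProd, map_list_prod, map_map]
  congr 2
  funext i
  exact cs.lift_apply_simple _ i

open Classical in
theorem inversionParity_wordProd (ω : List B) (t : W) :
    cs.inversionParity (cs.wordProd ω) t = (count t (cs.rightInvSeq ω) : ZMod 2) := by
  rw [inversionParity, reflAction_wordProd, prod_map_simpleReflAction_apply, zero_add]

theorem reflAction_apply (w t : W) (ε : ZMod 2) :
    cs.reflAction w (t, ε) = (w * t * w⁻¹, ε + cs.inversionParity w t) := by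
  obtain ⟨ω, rfl⟩ := cs.wordProd_surjective w
  rw [reflAction_wordProd, prod_map_simpleReflAction_apply, inversionParity_wordProd]

theorem inversionParity_mul (u v t : W) :
    cs.inversionParity (u * v) t =
      cs.inversionParity v t + cs.inversionParity u (v * t * v⁻¹) := by
  rw [inversionParity, map_mul]
  change (cs.reflAction u (cs.reflAction v (t, 0))).2 = _
  rw [reflAction_apply cs v, reflAction_apply, zero_add]

theorem inversionParity_one (t : W) : cs.inversionParity 1 t = 0 := by
  rw [inversionParity, map_one]
  rfl

theorem inversionParity_inv_conj (w t : W) :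
    cs.inversionParity w⁻¹ (w * t * w⁻¹) = cs.inversionParity w t := by
  have h := cs.inversionParity_mul w⁻¹ w t
  rw [inv_mul_cancel, inversionParity_one] at h
  grind

theorem inversionParity_simple_self (i : B) :
    cs.inversionParity (cs.simple i) (cs.simple i) = 1 := by
  simpa using cs.inversionParity_wordProd [i] (cs.simple i)

theorem inversionParity_self {t : W} (ht : cs.IsReflection t) : cs.inversionParity t t = 1 := by
  obtain ⟨w, i, rfl⟩ := ht
  -- `n(wsw⁻¹, wsw⁻¹) = n(w⁻¹, wsw⁻¹) + n(s, s) + n(w, s)`, and the outer terms agree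
  have hs : w⁻¹ * (w * cs.simple i * w⁻¹) * w⁻¹⁻¹ = cs.simple i := by group
  have hss : cs.simple i * cs.simple i * (cs.simple i)⁻¹ = cs.simple i := by group
  rw [inversionParity_mul, hs, inversionParity_mul, hss, inversionParity_simple_self,
    inversionParity_inv_conj]
  grind

open Classical in
theorem length_mul_lt_of_inversionParity_eq_one {w t : W} (h : cs.inversionParity w t = 1) :
    cs.length (w * t) < cs.length w := by
  obtain ⟨ω, hω, rfl⟩ := cs.exists_isReduced w
  rw [inversionParity_wordProd, ZMod.natCast_eq_one_iff_odd] at h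
  exact (cs.isRightInversion_of_mem_rightInvSeq hω (count_pos_iff.1 h.pos)).2

theorem inversionParity_eq_zero_of_length_lt {w t : W} (h : cs.length w < cs.length (w * t)) :
    cs.inversionParity w t = 0 := by
  by_contra hne
  have := cs.length_mul_lt_of_inversionParity_eq_one ((ZMod.eq_one_iff_ne_zero_mod_two _).2 hne)
  omega

theorem inversionParity_eq_one_of_length_mul_lt {w t : W} (ht : cs.IsReflection t)
    (h : cs.length (w * t) < cs.length w) : cs.inversionParity w t = 1 := by
  have hwtt : w * t * t = w := by rw [mul_assoc, ht.mul_self, mul_one]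
  have hwt : cs.inversionParity (w * t) t = 0 :=
    cs.inversionParity_eq_zero_of_length_lt (by rwa [hwtt])
  have := cs.inversionParity_mul (w * t) t t
  rwa [hwtt, ht.mul_self, one_mul, ht.inv, inversionParity_self cs ht, hwt, add_zero] at this

theorem length_mul_conj_lt {t : W} (ht : cs.IsReflection t) {u w : W}
    (hw : cs.length w < cs.length (w * t)) (h : cs.length (u * w * t) < cs.length (u * w)) :
    cs.length (u * (w * t * w⁻¹)) < cs.length u := by
  have huw := cs.inversionParity_eq_one_of_length_mul_lt ht h
  rw [inversionParity_mul, cs.inversionParity_eq_zero_of_length_lt hw, zero_add] at huw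
  exact cs.length_mul_lt_of_inversionParity_eq_one huw

end CoxeterSystem

theorem bruhatLE.trans {cs : CoxeterSystem M W} {a b c : W} (hab : bruhatLE cs a b)
    (hbc : bruhatLE cs b c) : bruhatLE cs a c :=
  Relation.ReflTransGen.trans hab hbc

section Bruhat

variable (cs : CoxeterSystem M W)

theorem bruhatLE_mul_of_length_lt {a t : W} (ht : cs.IsReflection t)
    (h : cs.length a < cs.length (a * t)) : bruhatLE cs a (a * t) :=
  .single ⟨t, ht, rfl, h⟩

theorem bruhatLE_mul_of_length_mul_lt {a t : W} (ht : cs.IsReflection t)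
    (h : cs.length (a * t) < cs.length a) : bruhatLE cs (a * t) a :=
  .single ⟨t, ht, by rw [mul_assoc, ht.mul_self, mul_one], h⟩

theorem bruhatLE_mul_conj {t : W} (ht : cs.IsReflection t) {u w : W}
    (hw : cs.length w < cs.length (w * t)) (h : cs.length (u * w * t) < cs.length (u * w)) :
    bruhatLE cs (u * (w * t * w⁻¹)) u :=
  bruhatLE_mul_of_length_mul_lt cs (ht.conj w) (cs.length_mul_conj_lt ht hw h)

variable {cs}

theorem bruhatLE.exists_mul_le_mul {w w' : W} (h : bruhatLE cs w w') (x' : W) :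
    ∃ x, bruhatLE cs x x' ∧ bruhatLE cs (x * w) (x' * w') := by
  induction h using Relation.ReflTransGen.head_induction_on with
  | refl => exact ⟨x', .refl, .refl⟩
  | @head a _ step _ ih =>
    obtain ⟨t, ht, rfl, hlen⟩ := step
    obtain ⟨x, hxx', hle⟩ := ih
    rcases lt_or_gt_of_ne (ht.length_mul_left_ne (x * a)) with hc | hc
    · refine ⟨x * (a * t * a⁻¹), (bruhatLE_mul_conj cs ht hlen hc).trans hxx', ?_⟩
      rwa [show x * (a * t * a⁻¹) * a = x * (a * t) by group]
    · exact ⟨x, hxx', (bruhatLE_mul_of_length_lt cs ht hc).trans (by rwa [mul_assoc])⟩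

theorem bruhatLE.exists_mul_le_mul' {w w' : W} (h : bruhatLE cs w w') (x' : W) :
    ∃ x, bruhatLE cs x x' ∧ bruhatLE cs (x' * w) (x * w') := by
  induction h using Relation.ReflTransGen.head_induction_on generalizing x' with
  | refl => exact ⟨x', .refl, .refl⟩
  | @head a _ step _ ih =>
    obtain ⟨t, ht, rfl, hlen⟩ := step
    rcases lt_or_gt_of_ne (ht.length_mul_left_ne (x' * a)) with hc | hc
    · obtain ⟨x, hx, hle⟩ := ih (x' * (a * t * a⁻¹))
      refine ⟨x, hx.trans (bruhatLE_mul_conj cs ht hlen hc), ?_⟩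
      rwa [show x' * (a * t * a⁻¹) * (a * t) = x' * a by simp [mul_assoc, ht.mul_self]] at hle
    · obtain ⟨x, hx, hle⟩ := ih x'
      exact ⟨x, hx, (bruhatLE_mul_of_length_lt cs ht hc).trans (by rwa [mul_assoc])⟩

end Bruhat

/-- If `w ≤ w'`, then (i) there is `x ≤ x'` with `x w ≤ x' w'`, and (ii) there is
`x ≤ x'` with `x' w ≤ x w'`. -/
theorem exists_le_mul_le (cs : CoxeterSystem M W) (x' w w' : W) (h : bruhatLE cs w w') :
    (∃ x : W, bruhatLE cs x x' ∧ bruhatLE cs (x * w) (x' * w')) ∧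
    (∃ x : W, bruhatLE cs x x' ∧ bruhatLE cs (x' * w) (x * w')) :=
  ⟨h.exists_mul_le_mul x', h.exists_mul_le_mul' x'⟩
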